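/- The merge operator on control-language expressions is associative: for all E1, E2, E3, (E1 ⊔ E2) ⊔ E3 = E1 ⊔ (E2 ⊔ E3), where equality includes both being undefined. -/

import Mathlib

/-- Expressions of the natural-number local language. -/
inductive Expr : Type
  | var (n : ℕ)
  | zero
  | succ (e : Expr)
  | tt
  | ff
deriving DecidableEq

/-- Capture-free substitution `e[x := e']` (there are no binders). -/
def subst : Expr → ℕ → Expr → Expr
  | .var m, x, e => if m = x then e else .var m
  | .zero, _, _ => .zero
  | .succ e', x, e => .succ (subst e' x e)
  | .tt, _, _ => .tt
  | .ff, _, _ => .ff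

/-- Free variables of an expression. -/
def FV : Expr → Finset ℕ
  | .var n => {n}
  | .zero => ∅
  | .succ e => FV e
  | .tt => ∅
  | .ff => ∅

/-- Synchronization labels. -/
inductive Choice : Type
  | L
  | R
deriving DecidableEq

/-- Control-language expressions. Locations and variables are natural numbers. -/
inductive Ctrl : Type
  | var (X : ℕ)
  | funLocal (F x : ℕ) (E : Ctrl)
  | funGlobal (F X : ℕ) (E : Ctrl)
  | appLocal (E : Ctrl) (e : Expr)
  | appGlobal (E1 E2 : Ctrl)
  | unit
  | ret (e : Expr)
  | letRet (x : ℕ) (E1 E2 : Ctrl)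
  | send (e : Expr) (ℓ : ℕ) (E : Ctrl)
  | recv (x : ℕ) (ℓ : ℕ) (E : Ctrl)
  | ite (e : Expr) (E1 E2 : Ctrl)
  | choose (d : Choice) (ℓ : ℕ) (E : Ctrl)
  | allowL (ℓ : ℕ) (E : Ctrl)
  | allowR (ℓ : ℕ) (E : Ctrl)
  | allowLR (ℓ : ℕ) (E1 E2 : Ctrl)
deriving DecidableEq

/-- The partial merge operator on control expressions. -/
def merge : Ctrl → Ctrl → Option Ctrl
  | .var X, .var Y => if X = Y then some (.var X) else none
  | .unit, .unit => some .unit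
  | .ret e, .ret e' => if e = e' then some (.ret e) else none
  | .funLocal F x E, .funLocal F' x' E' =>
      if F = F' ∧ x = x' ∧ E = E' then some (.funLocal F x E) else none
  | .funGlobal F X E, .funGlobal F' X' E' =>
      if F = F' ∧ X = X' ∧ E = E' then some (.funGlobal F X E) else none
  | .appLocal E a, .appLocal E' a' =>
      if a = a' then (merge E E').map (fun M => .appLocal M a) else none
  | .appGlobal E1 E2, .appGlobal E1' E2' => do
      let A ← merge E1 E1'; let B ← merge E2 E2'; pure (.appGlobal A B)
  | .letRet x E1 E2, .letRet x' E1' E2' =>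
      if x = x' then do
        let A ← merge E1 E1'; let B ← merge E2 E2'; pure (.letRet x A B)
      else none
  | .send e ℓ E, .send e' ℓ' E' =>
      if e = e' ∧ ℓ = ℓ' then (merge E E').map (fun M => .send e ℓ M) else none
  | .recv x ℓ E, .recv x' ℓ' E' =>
      if x = x' ∧ ℓ = ℓ' then (merge E E').map (fun M => .recv x ℓ M) else none
  | .ite e E1 E2, .ite e' E1' E2' =>
      if e = e' then do
        let A ← merge E1 E1'; let B ← merge E2 E2'; pure (.ite e A B)
      else none
  | .choose d ℓ E, .choose d' ℓ' E' =>
      if d = d' ∧ ℓ = ℓ' then (merge E E').map (fun M => .choose d ℓ M) else none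
  | .allowL ℓ E, .allowL ℓ' E' =>
      if ℓ = ℓ' then (merge E E').map (fun M => .allowL ℓ M) else none
  | .allowL ℓ E, .allowR ℓ' E' =>
      if ℓ = ℓ' then some (.allowLR ℓ E E') else none
  | .allowL ℓ E, .allowLR ℓ' E1' E2' =>
      if ℓ = ℓ' then (merge E E1').map (fun M => .allowLR ℓ M E2') else none
  | .allowR ℓ E, .allowL ℓ' E' =>
      if ℓ = ℓ' then some (.allowLR ℓ E' E) else none
  | .allowR ℓ E, .allowR ℓ' E' =>
      if ℓ = ℓ' then (merge E E').map (fun M => .allowR ℓ M) else none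
  | .allowR ℓ E, .allowLR ℓ' E1' E2' =>
      if ℓ = ℓ' then (merge E E2').map (fun M => .allowLR ℓ E1' M) else none
  | .allowLR ℓ E1 E2, .allowL ℓ' E' =>
      if ℓ = ℓ' then (merge E1 E').map (fun M => .allowLR ℓ M E2) else none
  | .allowLR ℓ E1 E2, .allowR ℓ' E' =>
      if ℓ = ℓ' then (merge E2 E').map (fun M => .allowLR ℓ E1 M) else none
  | .allowLR ℓ E1 E2, .allowLR ℓ' E1' E2' =>
      if ℓ = ℓ' then do
        let A ← merge E1 E1'; let B ← merge E2 E2'; pure (.allowLR ℓ A B)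
      else none
  | _, _ => none

/-- Substitution of a local expression `e` for the local variable `x`
    throughout a control expression (respecting local-variable binders). -/
def substCtrl : Ctrl → ℕ → Expr → Ctrl
  | .var X, _, _ => .var X
  | .funLocal F y E, x, e => .funLocal F y (if y = x then E else substCtrl E x e)
  | .funGlobal F X E, x, e => .funGlobal F X (substCtrl E x e)
  | .appLocal E a, x, e => .appLocal (substCtrl E x e) (subst a x e)
  | .appGlobal E1 E2, x, e => .appGlobal (substCtrl E1 x e) (substCtrl E2 x e)
  | .unit, _, _ => .unit
  | .ret a, x, e => .ret (subst a x e)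
  | .letRet y E1 E2, x, e =>
      .letRet y (substCtrl E1 x e) (if y = x then E2 else substCtrl E2 x e)
  | .send a ℓ E, x, e => .send (subst a x e) ℓ (substCtrl E x e)
  | .recv y ℓ E, x, e => .recv y ℓ (if y = x then E else substCtrl E x e)
  | .ite a E1 E2, x, e => .ite (subst a x e) (substCtrl E1 x e) (substCtrl E2 x e)
  | .choose d ℓ E, x, e => .choose d ℓ (substCtrl E x e)
  | .allowL ℓ E, x, e => .allowL ℓ (substCtrl E x e)
  | .allowR ℓ E, x, e => .allowR ℓ (substCtrl E x e)
  | .allowLR ℓ E1 E2, x, e => .allowLR ℓ (substCtrl E1 x e) (substCtrl E2 x e)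

/-- Substitution of a control expression for a control variable. -/
def substV : Ctrl → ℕ → Ctrl → Ctrl
  | .var Y, X, V => if Y = X then V else .var Y
  | .funLocal F y E, X, V => .funLocal F y (if F = X then E else substV E X V)
  | .funGlobal F Y E, X, V =>
      .funGlobal F Y (if F = X ∨ Y = X then E else substV E X V)
  | .appLocal E a, X, V => .appLocal (substV E X V) a
  | .appGlobal E1 E2, X, V => .appGlobal (substV E1 X V) (substV E2 X V)
  | .unit, _, _ => .unit
  | .ret a, _, _ => .ret a
  | .letRet y E1 E2, X, V => .letRet y (substV E1 X V) (substV E2 X V)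
  | .send a ℓ E, X, V => .send a ℓ (substV E X V)
  | .recv y ℓ E, X, V => .recv y ℓ (substV E X V)
  | .ite a E1 E2, X, V => .ite a (substV E1 X V) (substV E2 X V)
  | .choose d ℓ E, X, V => .choose d ℓ (substV E X V)
  | .allowL ℓ E, X, V => .allowL ℓ (substV E X V)
  | .allowR ℓ E, X, V => .allowR ℓ (substV E X V)
  | .allowLR ℓ E1 E2, X, V => .allowLR ℓ (substV E1 X V) (substV E2 X V)

/-- The less-nondeterminism relation `⊑` on control expressions. -/
inductive LND : Ctrl → Ctrl → Prop
  | var {X} : LND (.var X) (.var X)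
  | unit : LND .unit .unit
  | ret {e} : LND (.ret e) (.ret e)
  | funLocal {F x E} : LND (.funLocal F x E) (.funLocal F x E)
  | funGlobal {F X E} : LND (.funGlobal F X E) (.funGlobal F X E)
  | appLocal {E1 E2 e} : LND E1 E2 → LND (.appLocal E1 e) (.appLocal E2 e)
  | appGlobal {E11 E12 E21 E22} :
      LND E11 E21 → LND E12 E22 → LND (.appGlobal E11 E12) (.appGlobal E21 E22)
  | letRet {x E11 E12 E21 E22} :
      LND E11 E21 → LND E12 E22 → LND (.letRet x E11 E12) (.letRet x E21 E22)
  | send {e ℓ E1 E2} : LND E1 E2 → LND (.send e ℓ E1) (.send e ℓ E2)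
  | recv {x ℓ E1 E2} : LND E1 E2 → LND (.recv x ℓ E1) (.recv x ℓ E2)
  | ite {e E11 E12 E21 E22} :
      LND E11 E21 → LND E12 E22 → LND (.ite e E11 E12) (.ite e E21 E22)
  | choose {d ℓ E1 E2} : LND E1 E2 → LND (.choose d ℓ E1) (.choose d ℓ E2)
  | allowL {ℓ E1 E2} : LND E1 E2 → LND (.allowL ℓ E1) (.allowL ℓ E2)
  | allowR {ℓ E1 E2} : LND E1 E2 → LND (.allowR ℓ E1) (.allowR ℓ E2)
  | allowLR {ℓ E11 E12 E21 E22} :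
      LND E11 E21 → LND E12 E22 → LND (.allowLR ℓ E11 E12) (.allowLR ℓ E21 E22)
  | allowL_LR {ℓ E1 E21 E22} : LND E1 E21 → LND (.allowL ℓ E1) (.allowLR ℓ E21 E22)
  | allowR_LR {ℓ E1 E21 E22} : LND E1 E22 → LND (.allowR ℓ E1) (.allowLR ℓ E21 E22)

/-- Control-language values, relative to a notion `eval` of local values. -/
inductive CtrlVal (eval : Expr → Prop) : Ctrl → Prop
  | unit : CtrlVal eval .unit
  | ret {v} : eval v → CtrlVal eval (.ret v)
  | funLocal {F x E} : CtrlVal eval (.funLocal F x E)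
  | funGlobal {F X E} : CtrlVal eval (.funGlobal F X E)

/-- Labels for the control-language labeled transition system. -/
inductive Label : Type
  | tau
  | sendl (v : Expr) (ℓ : ℕ)
  | recvl (ℓ : ℕ) (v : Expr)
  | choosel (d : Choice) (ℓ : ℕ)
  | allow (ℓ : ℕ) (d : Choice)
  | syncTau
  | fn (l : Label)
  | arg (l : Label)

/-- The labeled operational semantics of control expressions, generic over
    the step relation `estep` and value predicate `eval` of the local language. -/
inductive CStep (estep : Expr → Expr → Prop) (eval : Expr → Prop) :
    Label → Ctrl → Ctrl → Prop
  | retE {e1 e2} : estep e1 e2 → CStep estep eval .tau (.ret e1) (.ret e2)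
  | ifE {e1 e2 E1 E2} :
      estep e1 e2 → CStep estep eval .tau (.ite e1 E1 E2) (.ite e2 E1 E2)
  | ifTrue {E1 E2} : CStep estep eval .tau (.ite .tt E1 E2) E1
  | ifFalse {E1 E2} : CStep estep eval .tau (.ite .ff E1 E2) E2
  | sendE {e1 e2 ℓ E} :
      estep e1 e2 → CStep estep eval .tau (.send e1 ℓ E) (.send e2 ℓ E)
  | sendV {v ℓ E} : eval v → CStep estep eval (.sendl v ℓ) (.send v ℓ E) E
  | recvV {v x ℓ E} :
      eval v → CStep estep eval (.recvl ℓ v) (.recv x ℓ E) (substCtrl E x v)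
  | choose {d ℓ E} : CStep estep eval (.choosel d ℓ) (.choose d ℓ E) E
  | allowLRL {ℓ E1 E2} : CStep estep eval (.allow ℓ .L) (.allowLR ℓ E1 E2) E1
  | allowLRR {ℓ E1 E2} : CStep estep eval (.allow ℓ .R) (.allowLR ℓ E1 E2) E2
  | allowLOnly {ℓ E} : CStep estep eval (.allow ℓ .L) (.allowL ℓ E) E
  | allowROnly {ℓ E} : CStep estep eval (.allow ℓ .R) (.allowR ℓ E) E
  | letRetArg {l x E1 E1' E2} :
      CStep estep eval l E1 E1' →
      CStep estep eval (.arg l) (.letRet x E1 E2) (.letRet x E1' E2)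
  | letRetV {v x E2} :
      eval v → CStep estep eval .syncTau (.letRet x (.ret v) E2) (substCtrl E2 x v)
  | appLocalFun {l F1 F2 e} :
      CStep estep eval l F1 F2 →
      CStep estep eval (.fn l) (.appLocal F1 e) (.appLocal F2 e)
  | appLocalArg {F e1 e2} :
      estep e1 e2 → CStep estep eval .tau (.appLocal F e1) (.appLocal F e2)
  | appLocalV {F x E v} :
      eval v →
      CStep estep eval .syncTau (.appLocal (.funLocal F x E) v) (substCtrl E x v)
  | appGlobalFun {l F1 F2 A} :
      CStep estep eval l F1 F2 →
      CStep estep eval (.fn l) (.appGlobal F1 A) (.appGlobal F2 A)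
  | appGlobalArg {l F A1 A2} :
      CStep estep eval l A1 A2 →
      CStep estep eval (.arg l) (.appGlobal F A1) (.appGlobal F A2)
  | appGlobalV {F X E V} :
      CtrlVal eval V →
      CStep estep eval .syncTau (.appGlobal (.funGlobal F X E) V) (substV E X V)

/-!
Merging two expressions is only defined when their head constructors agree, and it then
merges the children componentwise, so associativity passes from the children to the parent
by structural induction; when the heads of a triple disagree, both sides are undefined.
The allow-constructors are the exception: `allowL ℓ a`, `allowR ℓ b` and `allowLR ℓ a b`
are read as the pair of optional branches `(some a, none)`, `(none, some b)`, `(some a, some b)`.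
Extending `merge` to optional expressions with `none` as a unit, the merge of two
allow-expressions is the componentwise merge of their branch pairs, and associativity of this
extension follows from that of `merge` on the branches.
-/

section PartialAssoc

variable {α β γ δ : Type*}

def PartialAssoc (m : α → α → Option α) (a b c : α) : Prop :=
  (m a b).bind (fun d => m d c) = (m b c).bind (fun d => m a d)

theorem PartialAssoc.of_self {m : α → α → Option α} {a : α} (h : m a a = some a) :
    PartialAssoc m a a a := by
  simp [PartialAssoc, h]

theorem PartialAssoc.of_key_eq {K : Type*} {m : α → α → Option α} (κ : α → K)
    (hκ : ∀ a b c, m a b = some c → κ a = κ b ∧ κ c = κ a) {a b c : α}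
    (h : κ a = κ b → κ b = κ c → PartialAssoc m a b c) : PartialAssoc m a b c := by
  have hnone : ∀ {a b}, κ a ≠ κ b → m a b = none := fun hne =>
    Option.eq_none_iff_forall_ne_some.2 fun _ hm => hne (hκ _ _ _ hm).1
  by_cases hab : κ a = κ b
  · by_cases hbc : κ b = κ c
    · exact h hab hbc
    · rw [PartialAssoc, hnone hbc, Option.bind_none, Option.bind_eq_none_iff]
      exact fun d hd => hnone fun hdc => hbc (by rw [← hab, ← (hκ _ _ _ hd).2, hdc])
  · rw [PartialAssoc, hnone hab, Option.bind_none, eq_comm, Option.bind_eq_none_iff]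
    exact fun d hd => hnone fun had => hab (by rw [had, (hκ _ _ _ hd).2])

theorem PartialAssoc.map {m : α → α → Option α} {n : β → β → Option β} {f : α → β}
    (hf : ∀ a b, n (f a) (f b) = (m a b).map f) {a b c : α} (h : PartialAssoc m a b c) :
    PartialAssoc n (f a) (f b) (f c) := by
  unfold PartialAssoc at h ⊢
  simpa only [hf, Option.bind_map, Option.map_bind, Function.comp_def] using
    congrArg (Option.map f) h

theorem PartialAssoc.of_map {m : α → α → Option α} {n : β → β → Option β} {f : α → β}
    (hinj : f.Injective) (hf : ∀ a b, n (f a) (f b) = (m a b).map f) {a b c : α}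
    (h : PartialAssoc n (f a) (f b) (f c)) : PartialAssoc m a b c := by
  unfold PartialAssoc at h ⊢
  apply Option.map_injective hinj
  simpa only [hf, Option.bind_map, Option.map_bind, Function.comp_def] using h

def prodMerge (m : α → α → Option α) (n : β → β → Option β) (p q : α × β) : Option (α × β) :=
  Option.map₂ Prod.mk (m p.1 q.1) (n p.2 q.2)

theorem Option.bind_map₂_mk (x : Option α) (y : Option β) (f : α → Option γ) (g : β → Option δ) :
    (Option.map₂ Prod.mk x y).bind (fun p => Option.map₂ Prod.mk (f p.1) (g p.2)) =
      Option.map₂ Prod.mk (x.bind f) (y.bind g) := by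
  cases x <;> cases y <;> simp

theorem Option.map_map₂_mk (x : Option α) (y : Option β) (f : α → β → γ) :
    (Option.map₂ Prod.mk x y).map (fun p => f p.1 p.2) =
      x.bind fun a => y.bind fun b => some (f a b) := by
  cases x <;> cases y <;> rfl

theorem PartialAssoc.prod {m : α → α → Option α} {n : β → β → Option β} {a₁ a₂ a₃ : α}
    {b₁ b₂ b₃ : β} (ha : PartialAssoc m a₁ a₂ a₃) (hb : PartialAssoc n b₁ b₂ b₃) :
    PartialAssoc (prodMerge m n) (a₁, b₁) (a₂, b₂) (a₃, b₃) := by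
  unfold PartialAssoc at ha hb ⊢
  simp only [prodMerge]
  calc _ = Option.map₂ Prod.mk ((m a₁ a₂).bind (m · a₃)) ((n b₁ b₂).bind (n · b₃)) :=
        Option.bind_map₂_mk ..
    _ = Option.map₂ Prod.mk ((m a₂ a₃).bind (m a₁ ·)) ((n b₂ b₃).bind (n b₁ ·)) := by
        rw [ha, hb]
    _ = _ := (Option.bind_map₂_mk ..).symm

def mergeOpt (m : α → α → Option α) : Option α → Option α → Option (Option α)
  | none, y => some y
  | some a, none => some (some a)
  | some a, some b => (m a b).map some

theorem partialAssoc_mergeOpt {m : α → α → Option α} {x y z : Option α}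
    (h : ∀ a ∈ x, ∀ b c, PartialAssoc m a b c) : PartialAssoc (mergeOpt m) x y z := by
  rcases x with _ | a
  · simp [PartialAssoc, mergeOpt]
  rcases y with _ | b
  · cases z <;> simp [PartialAssoc, mergeOpt]
  rcases z with _ | c
  · simp only [PartialAssoc, mergeOpt, Option.bind_map, Function.comp_apply, Option.bind_some]
    cases m a b <;> rfl
  exact (h a rfl b c).map (f := some) fun _ _ => rfl

end PartialAssoc

namespace Ctrl

inductive Head : Type
  | var (X : ℕ)
  | funLocal (F x : ℕ) (E : Ctrl)
  | funGlobal (F X : ℕ) (E : Ctrl)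
  | appLocal (e : Expr)
  | appGlobal
  | unit
  | ret (e : Expr)
  | letRet (x : ℕ)
  | send (e : Expr) (ℓ : ℕ)
  | recv (x ℓ : ℕ)
  | ite (e : Expr)
  | choose (d : Choice) (ℓ : ℕ)
  | allow (ℓ : ℕ)

def head : Ctrl → Head
  | .var X => .var X
  | .funLocal F x E => .funLocal F x E
  | .funGlobal F X E => .funGlobal F X E
  | .appLocal _ e => .appLocal e
  | .appGlobal _ _ => .appGlobal
  | .unit => .unit
  | .ret e => .ret e
  | .letRet x _ _ => .letRet x
  | .send e ℓ _ => .send e ℓ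
  | .recv x ℓ _ => .recv x ℓ
  | .ite e _ _ => .ite e
  | .choose d ℓ _ => .choose d ℓ
  | .allowL ℓ _ => .allow ℓ
  | .allowR ℓ _ => .allow ℓ
  | .allowLR ℓ _ _ => .allow ℓ

theorem head_eq_of_merge_eq_some {A B C : Ctrl} (h : merge A B = some C) :
    head A = head B ∧ head C = head A := by
  cases A <;> cases B <;> aesop (add simp [merge, head, Option.bind_eq_some_iff])

-- Sending `(none, none)` to `none`, the unit of `mergeOpt`, makes `allowOf ℓ` a homomorphism.
def allowOf (ℓ : ℕ) : Option Ctrl × Option Ctrl → Option Ctrl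
  | (none, none) => none
  | (some a, none) => some (allowL ℓ a)
  | (none, some b) => some (allowR ℓ b)
  | (some a, some b) => some (allowLR ℓ a b)

def branches : Ctrl → Option Ctrl × Option Ctrl
  | allowL _ a => (some a, none)
  | allowR _ b => (none, some b)
  | allowLR _ a b => (some a, some b)
  | _ => (none, none)

theorem allowOf_branches {ℓ : ℕ} {E : Ctrl} (h : head E = .allow ℓ) :
    allowOf ℓ (branches E) = some E := by
  cases E <;> cases h <;> rfl

theorem mergeOpt_allowOf (ℓ : ℕ) (p q : Option Ctrl × Option Ctrl) :
    mergeOpt merge (allowOf ℓ p) (allowOf ℓ q) =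
      (prodMerge (mergeOpt merge) (mergeOpt merge) p q).map (allowOf ℓ) := by
  rcases p with ⟨_ | a, _ | b⟩ <;> rcases q with ⟨_ | c, _ | d⟩ <;>
    simp only [allowOf, mergeOpt, prodMerge, merge, if_true] <;>
    (try cases merge a c) <;> (try cases merge b d) <;> rfl

theorem partialAssoc_merge_of_head_eq_allow {ℓ : ℕ} {E₁ E₂ E₃ : Ctrl}
    (h₁ : head E₁ = .allow ℓ) (h₂ : head E₂ = .allow ℓ) (h₃ : head E₃ = .allow ℓ)
    (hl : ∀ a ∈ (branches E₁).1, ∀ b c, PartialAssoc merge a b c)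
    (hr : ∀ a ∈ (branches E₁).2, ∀ b c, PartialAssoc merge a b c) :
    PartialAssoc merge E₁ E₂ E₃ := by
  refine PartialAssoc.of_map (n := mergeOpt merge) (Option.some_injective _) (fun _ _ => rfl) ?_
  rw [← allowOf_branches h₁, ← allowOf_branches h₂, ← allowOf_branches h₃]
  exact ((partialAssoc_mergeOpt hl).prod (partialAssoc_mergeOpt hr)).map (mergeOpt_allowOf ℓ)

theorem partialAssoc_merge (E₁ E₂ E₃ : Ctrl) : PartialAssoc merge E₁ E₂ E₃ := by
  induction E₁ generalizing E₂ E₃ <;>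
    refine PartialAssoc.of_key_eq head (fun _ _ _ => head_eq_of_merge_eq_some) fun h₁₂ h₂₃ => ?_
  case allowL _ _ ih | allowR _ _ ih =>
    refine partialAssoc_merge_of_head_eq_allow rfl h₁₂.symm (h₂₃.symm.trans h₁₂.symm) ?_ ?_ <;>
      rintro a ⟨⟩
    exact ih
  case allowLR _ _ _ ihA ihB =>
    exact partialAssoc_merge_of_head_eq_allow rfl h₁₂.symm (h₂₃.symm.trans h₁₂.symm)
      (by rintro a ⟨⟩; exact ihA) (by rintro a ⟨⟩; exact ihB)
  all_goals
    cases E₂ <;> cases h₁₂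
    cases E₃ <;> cases h₂₃
  case var | funLocal | funGlobal | unit | ret => exact .of_self (by simp [merge])
  case appLocal _ e ih _ _ =>
    exact (ih _ _).map (n := merge) (f := (appLocal · e)) fun _ _ => by simp [merge]
  case appGlobal _ _ ihA ihB _ _ _ _ =>
    exact ((ihA _ _).prod (ihB _ _)).map (n := merge) (f := fun p => appGlobal p.1 p.2)
      fun _ _ => by simp [merge, prodMerge, Option.map_map₂_mk]
  case letRet x _ _ ihA ihB _ _ _ _ =>
    exact ((ihA _ _).prod (ihB _ _)).map (n := merge) (f := fun p => letRet x p.1 p.2)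
      fun _ _ => by simp [merge, prodMerge, Option.map_map₂_mk]
  case ite e _ _ ihA ihB _ _ _ _ =>
    exact ((ihA _ _).prod (ihB _ _)).map (n := merge) (f := fun p => ite e p.1 p.2)
      fun _ _ => by simp [merge, prodMerge, Option.map_map₂_mk]
  case send e ℓ _ ih _ _ =>
    exact (ih _ _).map (n := merge) (f := send e ℓ) fun _ _ => by simp [merge]
  case recv x ℓ _ ih _ _ =>
    exact (ih _ _).map (n := merge) (f := recv x ℓ) fun _ _ => by simp [merge]
  case choose d ℓ _ ih _ _ =>
    exact (ih _ _).map (n := merge) (f := choose d ℓ) fun _ _ => by simp [merge]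

end Ctrl

/-- Merge is associative (equality of partial results, including undefinedness). -/
theorem merge_assoc (E1 E2 E3 : Ctrl) :
    (merge E1 E2).bind (fun E => merge E E3)
      = (merge E2 E3).bind (fun E => merge E1 E) :=
  Ctrl.partialAssoc_merge E1 E2 E3
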